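/- Let X be a finite poset and F a field with char(F) = 2 and |F| > 2. Then every bijective F-linear map φ: I(X,F) → I(X,F) that preserves idempotents is a Lie automorphism of I(X,F), i.e. φ(fg − gf) = φ(f)φ(g) − φ(g)φ(f) for all f, g ∈ I(X,F). -/

import Mathlib

open IncidenceAlgebra

/-- A poset is connected if any two elements can be joined by a sequence of elements
in which consecutive elements are comparable. -/
def PosetConnected (X : Type*) [PartialOrder X] : Prop :=
  ∀ x y : X, Relation.ReflTransGen (fun a b : X => a ≤ b ∨ b ≤ a) x y

/-!
In characteristic 2 the commutator `x * y - y * x` is the Jordan product `x * y + y * x`, so it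
suffices that the bilinear defect `T x y = φ (x * y + y * x) - (φ x * φ y + φ y * φ x)` vanishes,
and by bilinearity only on matrix units. With `Q x = φ (x * x) - φ x * φ x` one has
`Q (x + y) = Q x + Q y + T x y`, and `Q` vanishes on idempotents.

If `e` is idempotent, `v * v = 0` and `e * v + v * e = v`, then every `e + t • v` is idempotent;
comparing `t = 1` with a scalar `t ∉ {0, 1}` (this is where `2 < #F` enters) gives `T e v = 0`.
For idempotents `p`, `q` with `q * p = 0`, the splitting `p = (p - p * q) + p * q` reduces
`T p q` to two orthogonal idempotents and to a pair of the previous kind, so `T p q = 0`.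
The pairs `e_aa` or `e_aa + e_ab` against `e_cc` or `e_cd + e_dd` then reach every pair of
matrix units.
-/

section Defect
variable {R A B : Type*} [CommRing R] [Ring A] [Algebra R A] [Ring B] [Algebra R B]

def jordanDefect (φ : A →ₗ[R] B) : A →ₗ[R] A →ₗ[R] B :=
  (LinearMap.mul R A + (LinearMap.mul R A).flip).compr₂ φ -
    (LinearMap.mul R B + (LinearMap.mul R B).flip).compl₁₂ φ φ

lemma jordanDefect_apply (φ : A →ₗ[R] B) (x y : A) :
    jordanDefect φ x y = φ (x * y + y * x) - (φ x * φ y + φ y * φ x) := rfl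

lemma jordanDefect_comm (φ : A →ₗ[R] B) (x y : A) : jordanDefect φ x y = jordanDefect φ y x := by
  rw [jordanDefect_apply, jordanDefect_apply, add_comm (x * y), add_comm (φ x * φ y)]

def squareDefect (φ : A →ₗ[R] B) (x : A) : B := φ (x * x) - φ x * φ x

lemma squareDefect_add (φ : A →ₗ[R] B) (x y : A) :
    squareDefect φ (x + y) = squareDefect φ x + squareDefect φ y + jordanDefect φ x y := by
  simp only [squareDefect, jordanDefect_apply, add_mul, mul_add, map_add]
  abel

lemma squareDefect_smul (φ : A →ₗ[R] B) (c : R) (x : A) :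
    squareDefect φ (c • x) = (c * c) • squareDefect φ x := by
  simp only [squareDefect, smul_mul_smul_comm, map_smul, smul_sub]

lemma sub_eq_add_of_two_eq_zero {M : Type*} [AddCommGroup M] [Module R M] (h2 : (2 : R) = 0)
    (u v : M) : u - v = u + v := by
  rw [sub_eq_add_neg, neg_eq_of_add_eq_zero_left (by rw [← two_smul R, h2, zero_smul])]

lemma map_commutator_of_jordanDefect_eq_zero {φ : A →ₗ[R] B} (h2 : (2 : R) = 0)
    (hφ : jordanDefect φ = 0) (x y : A) : φ (x * y - y * x) = φ x * φ y - φ y * φ x := by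
  rw [sub_eq_add_of_two_eq_zero h2, sub_eq_add_of_two_eq_zero h2, ← sub_eq_zero,
    ← jordanDefect_apply, hφ, LinearMap.zero_apply, LinearMap.zero_apply]

variable {φ : A →ₗ[R] B} (hφ : ∀ e, IsIdempotentElem e → IsIdempotentElem (φ e))
include hφ

lemma squareDefect_eq_zero {e : A} (he : IsIdempotentElem e) : squareDefect φ e = 0 := by
  rw [squareDefect, he.eq, (hφ e he).eq, sub_self]

lemma jordanDefect_eq_zero_of_isIdempotentElem_add {e f : A} (he : IsIdempotentElem e)
    (hf : IsIdempotentElem f) (hef : IsIdempotentElem (e + f)) : jordanDefect φ e f = 0 := by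
  simpa [squareDefect_eq_zero hφ, he, hf, hef] using (squareDefect_add φ e f).symm

lemma jordanDefect_self_eq_zero {e : A} (he : IsIdempotentElem e) : jordanDefect φ e e = 0 := by
  rw [jordanDefect_apply, he.eq, (hφ e he).eq, map_add, sub_self]

end Defect

lemma isIdempotentElem_add_smul {R A : Type*} [CommRing R] [Ring A] [Algebra R A] {e v : A}
    (he : IsIdempotentElem e) (hv : v * v = 0) (hev : e * v + v * e = v) (t : R) :
    IsIdempotentElem (e + t • v) := by
  rw [IsIdempotentElem, add_mul, mul_add, mul_add, he.eq, smul_mul_smul_comm, hv, smul_zero,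
    add_zero, mul_smul_comm, smul_mul_assoc, add_assoc, ← smul_add, hev]

section Field
variable {F A B : Type*} [Field F] [Ring A] [Algebra F A] [Ring B] [Algebra F B]
  {φ : A →ₗ[F] B} (hφ : ∀ e, IsIdempotentElem e → IsIdempotentElem (φ e))
  {μ : F} (hμ0 : μ ≠ 0) (hμ1 : μ ≠ 1)
include hφ hμ0 hμ1

lemma jordanDefect_eq_zero_of_mul_self_eq_zero {e v : A} (he : IsIdempotentElem e)
    (hv : v * v = 0) (hev : e * v + v * e = v) : jordanDefect φ e v = 0 := by
  have key : ∀ t : F, (t * t) • squareDefect φ v + t • jordanDefect φ e v = 0 := fun t => by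
    have := squareDefect_eq_zero hφ (isIdempotentElem_add_smul he hv hev t)
    rwa [squareDefect_add, squareDefect_eq_zero hφ he, squareDefect_smul, map_smul,
      zero_add] at this
  have h1 := key 1
  have hμ := key μ
  rw [one_mul, one_smul, one_smul] at h1
  have hq : (μ * (μ - 1)) • squareDefect φ v = 0 := by
    linear_combination (norm := module) hμ - μ • h1
  have hq0 : squareDefect φ v = 0 :=
    (smul_eq_zero.mp hq).resolve_left (mul_ne_zero hμ0 (sub_ne_zero.mpr hμ1))
  rwa [hq0, zero_add] at h1

lemma jordanDefect_eq_zero_of_mul_eq_zero {p q : A} (hp : IsIdempotentElem p)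
    (hq : IsIdempotentElem q) (hqp : q * p = 0) : jordanDefect φ p q = 0 := by
  have hpq : IsIdempotentElem (p - p * q) := by
    have : (p - p * q) * (p - p * q) = p * p - p * p * q - p * (q * p) + p * (q * p) * q := by
      noncomm_ring
    rw [IsIdempotentElem, this, hp.eq, hqp, mul_zero, zero_mul, sub_zero, add_zero]
  have horth : IsIdempotentElem (p - p * q + q) := by
    refine hpq.add hq ?_
    rw [sub_mul, mul_assoc, hq.eq, sub_self, zero_add, mul_sub, hqp, ← mul_assoc, hqp, zero_mul,
      sub_zero]
  have hcorner : jordanDefect φ q (p * q) = 0 := by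
    refine jordanDefect_eq_zero_of_mul_self_eq_zero hφ hμ0 hμ1 hq ?_ ?_
    · rw [mul_assoc, ← mul_assoc q, hqp, zero_mul, mul_zero]
    · rw [← mul_assoc, hqp, zero_mul, zero_add, mul_assoc, hq.eq]
  calc jordanDefect φ p q = jordanDefect φ (p - p * q) q + jordanDefect φ q (p * q) := by
        rw [jordanDefect_comm φ q, map_sub, LinearMap.sub_apply, sub_add_cancel]
    _ = 0 := by
        rw [jordanDefect_eq_zero_of_isIdempotentElem_add hφ hpq hq horth, hcorner, add_zero]

end Field

namespace IncidenceAlgebra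
variable {𝕜 X : Type*}

variable (𝕜) in
open Classical in
noncomputable def single [Zero 𝕜] [One 𝕜] [LE X] (a b : X) : IncidenceAlgebra 𝕜 X :=
  ⟨fun x y => if x = a ∧ y = b ∧ a ≤ b then 1 else 0,
    fun _ _ hxy => if_neg fun ⟨hx, hy, hab⟩ => hxy (hx ▸ hy ▸ hab)⟩

section LE
variable [Zero 𝕜] [One 𝕜] [LE X]

open Classical in
lemma single_apply (a b x y : X) :
    single 𝕜 a b x y = if x = a ∧ y = b ∧ a ≤ b then 1 else 0 := rfl

lemma single_of_not_le {a b : X} (h : ¬a ≤ b) : single 𝕜 a b = 0 := by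
  ext x y
  simp [single_apply, h]

end LE

lemma coe_sum [AddCommMonoid 𝕜] [LE X] {ι : Type*} (s : Finset ι)
    (f : ι → IncidenceAlgebra 𝕜 X) :
    ⇑(∑ i ∈ s, f i) = ∑ i ∈ s, ⇑(f i) :=
  map_sum (⟨⟨DFunLike.coe, coe_zero⟩, coe_add⟩ : IncidenceAlgebra 𝕜 X →+ X → X → 𝕜) f s

section Semiring
variable [Semiring 𝕜] [Preorder X] [LocallyFiniteOrder X]

lemma single_mul_single_of_ne {a b c d : X} (h : b ≠ c) :
    single 𝕜 a b * single 𝕜 c d = 0 := by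
  ext x y
  simp only [mul_apply, single_apply, zero_apply]
  refine Finset.sum_eq_zero fun z _ => ?_
  aesop

lemma single_mul_single {a b d : X} (hab : a ≤ b) (hbd : b ≤ d) :
    single 𝕜 a b * single 𝕜 b d = single 𝕜 a d := by
  classical
  ext x y hxy
  simp only [mul_apply, single_apply, ite_and, mul_ite, mul_one, mul_zero, Finset.sum_ite_eq',
    Finset.mem_Icc]
  aesop

lemma isIdempotentElem_single_self (a : X) : IsIdempotentElem (single 𝕜 a a) :=
  single_mul_single le_rfl le_rfl

lemma isIdempotentElem_single_self_add_single {a b : X} (hab : a < b) :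
    IsIdempotentElem (single 𝕜 a a + single 𝕜 a b) := by
  rw [IsIdempotentElem, add_mul, mul_add, mul_add, single_mul_single le_rfl le_rfl,
    single_mul_single le_rfl hab.le, single_mul_single_of_ne hab.ne',
    single_mul_single_of_ne hab.ne', add_zero, add_zero]

lemma isIdempotentElem_single_add_single_self {a b : X} (hab : a < b) :
    IsIdempotentElem (single 𝕜 a b + single 𝕜 b b) := by
  rw [IsIdempotentElem, add_mul, mul_add, mul_add, single_mul_single le_rfl le_rfl,
    single_mul_single hab.le le_rfl, single_mul_single_of_ne hab.ne',
    single_mul_single_of_ne hab.ne', zero_add, zero_add]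

end Semiring

variable [Fintype X]

lemma eq_sum_single [Semiring 𝕜] [LE X] (f : IncidenceAlgebra 𝕜 X) :
    f = ∑ a, ∑ b, f a b • single 𝕜 a b := by
  classical
  ext x y hxy
  simp [coe_sum, single_apply, ite_and, hxy]

lemma bilinear_ext_single [CommSemiring 𝕜] [Preorder X] {M : Type*} [AddCommMonoid M]
    [Module 𝕜 M] {B C : IncidenceAlgebra 𝕜 X →ₗ[𝕜] IncidenceAlgebra 𝕜 X →ₗ[𝕜] M}
    (h : ∀ a b c d : X, a ≤ b → c ≤ d →
      B (single 𝕜 a b) (single 𝕜 c d) = C (single 𝕜 a b) (single 𝕜 c d)) :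
    B = C := by
  have h' (a b c d : X) : B (single 𝕜 a b) (single 𝕜 c d) = C (single 𝕜 a b) (single 𝕜 c d) := by
    by_cases hab : a ≤ b
    · by_cases hcd : c ≤ d
      · exact h a b c d hab hcd
      · simp [single_of_not_le hcd]
    · simp [single_of_not_le hab]
  ext f g
  rw [eq_sum_single f, eq_sum_single g]
  simp [map_sum, h']

section JordanDefect
variable {F X B : Type*} [Field F] [PartialOrder X] [LocallyFiniteOrder X] [DecidableEq X]
  [Ring B] [Algebra F B] {φ : IncidenceAlgebra F X →ₗ[F] B}
  (hφ : ∀ e, IsIdempotentElem e → IsIdempotentElem (φ e))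
include hφ

lemma jordanDefect_single_self_single_self (a c : X) :
    jordanDefect φ (single F a a) (single F c c) = 0 := by
  rcases eq_or_ne a c with rfl | hac
  · exact jordanDefect_self_eq_zero hφ (isIdempotentElem_single_self a)
  · refine jordanDefect_eq_zero_of_isIdempotentElem_add hφ (isIdempotentElem_single_self a)
      (isIdempotentElem_single_self c) ((isIdempotentElem_single_self a).add
        (isIdempotentElem_single_self c) ?_)
    rw [single_mul_single_of_ne hac, single_mul_single_of_ne hac.symm, add_zero]

variable {μ : F} (hμ0 : μ ≠ 0) (hμ1 : μ ≠ 1)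
include hμ0 hμ1

lemma jordanDefect_single_single_self {a b : X} (hab : a < b) (c : X) :
    jordanDefect φ (single F a b) (single F c c) = 0 := by
  rcases eq_or_ne c a with rfl | hca
  · rw [jordanDefect_comm]
    refine jordanDefect_eq_zero_of_mul_self_eq_zero hφ hμ0 hμ1 (isIdempotentElem_single_self c)
      (single_mul_single_of_ne hab.ne') ?_
    rw [single_mul_single le_rfl hab.le, single_mul_single_of_ne hab.ne', add_zero]
  · have h := jordanDefect_eq_zero_of_mul_eq_zero hφ hμ0 hμ1
      (isIdempotentElem_single_self_add_single hab) (isIdempotentElem_single_self c)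
      (by rw [mul_add, single_mul_single_of_ne hca, single_mul_single_of_ne hca, add_zero])
    rwa [map_add, LinearMap.add_apply, jordanDefect_single_self_single_self hφ, zero_add] at h

lemma jordanDefect_single_single {a b c d : X} (hab : a < b) (hcd : c < d) (hda : d ≠ a) :
    jordanDefect φ (single F a b) (single F c d) = 0 := by
  have h := jordanDefect_eq_zero_of_mul_eq_zero hφ hμ0 hμ1
    (isIdempotentElem_single_self_add_single hab) (isIdempotentElem_single_add_single_self hcd)
    (by simp only [mul_add, add_mul, single_mul_single_of_ne hda, add_zero])
  simpa only [map_add, LinearMap.add_apply, jordanDefect_comm φ (single F a a),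
    jordanDefect_single_single_self hφ hμ0 hμ1 hab,
    jordanDefect_single_single_self hφ hμ0 hμ1 hcd,
    jordanDefect_single_self_single_self hφ, zero_add, add_zero] using h

lemma jordanDefect_eq_zero [Fintype X] : jordanDefect φ = 0 := by
  refine bilinear_ext_single fun a b c d hab hcd => ?_
  rw [LinearMap.zero_apply, LinearMap.zero_apply]
  rcases hab.eq_or_lt with rfl | hab <;> rcases hcd.eq_or_lt with rfl | hcd
  · exact jordanDefect_single_self_single_self hφ a c
  · rw [jordanDefect_comm]
    exact jordanDefect_single_single_self hφ hμ0 hμ1 hcd a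
  · exact jordanDefect_single_single_self hφ hμ0 hμ1 hab c
  · rcases ne_or_eq d a with hda | rfl
    · exact jordanDefect_single_single hφ hμ0 hμ1 hab hcd hda
    · rw [jordanDefect_comm]
      exact jordanDefect_single_single hφ hμ0 hμ1 hcd hab (hcd.trans hab).ne'

end JordanDefect

end IncidenceAlgebra

theorem stmt_4_general {X : Type*} [PartialOrder X] [Fintype X] [LocallyFiniteOrder X] [DecidableEq X]
    {F : Type*} [Field F] (hchar : ringChar F = 2) (hcard : 2 < Cardinal.mk F)
    (φ : IncidenceAlgebra F X →ₗ[F] IncidenceAlgebra F X)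
    (hidem : ∀ f : IncidenceAlgebra F X, f * f = f → φ f * φ f = φ f) :
    ∀ f g : IncidenceAlgebra F X, φ (f * g - g * f) = φ f * φ g - φ g * φ f := by
  obtain ⟨μ, hμ⟩ := Cardinal.exists_notMem_of_length_lt [(0 : F), 1] (by simpa using hcard)
  have : CharP F 2 := ringChar.of_eq hchar
  rw [List.mem_pair, not_or] at hμ
  exact map_commutator_of_jordanDefect_eq_zero CharTwo.two_eq_zero
    (jordanDefect_eq_zero hidem hμ.1 hμ.2)

/-- over a field of characteristic 2 with more than 2 elements, every bijective
linear idempotent preserver of the incidence algebra of a finite poset is a Lie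
automorphism. -/
theorem stmt_4 {X : Type*} [PartialOrder X] [Fintype X] [LocallyFiniteOrder X] [DecidableEq X]
    {F : Type*} [Field F] (hchar : ringChar F = 2) (hcard : 2 < Cardinal.mk F)
    (φ : IncidenceAlgebra F X →ₗ[F] IncidenceAlgebra F X)
    (hbij : Function.Bijective φ)
    (hidem : ∀ f : IncidenceAlgebra F X, f * f = f → φ f * φ f = φ f) :
    ∀ f g : IncidenceAlgebra F X, φ (f * g - g * f) = φ f * φ g - φ g * φ f :=
  stmt_4_general hchar hcard φ hidem
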